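/- Convergence of q-deformed convergents of an infinite continued fraction: let 0 < q < 1 and let (aₖ)_{k ≥ 1} be a sequence of integers with a₁ ≥ 0 and aₖ ≥ 1 for all k ≥ 2. For n ≥ 1 let Mₙ := σ₁(q)^{−a₁} · σ₂(q)^{a₂} · σ₁(q)^{−a₃} ⋯ (the product of the first n alternating factors, starting with σ₁(q)^{−a₁}), and let vₙ := Mₙ · (1, 0)ᵀ ∈ ℝ². Then for all n ≥ 2 the second coordinate of vₙ is strictly positive, and the sequence of ratios xₙ := (vₙ)₁ / (vₙ)₂ (n ≥ 2) converges to a limit in ℝ. -/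

import Mathlib

open Matrix Filter

/-- The q-deformed generator σ₁(q) = [[q⁻¹, −q⁻¹], [0, 1]]. -/
noncomputable def sig1 (q : ℝ) : Matrix (Fin 2) (Fin 2) ℝ := !![q⁻¹, -q⁻¹; 0, 1]

/-- The q-deformed generator σ₂(q) = [[1, 0], [1, q⁻¹]]. -/
noncomputable def sig2 (q : ℝ) : Matrix (Fin 2) (Fin 2) ℝ := !![1, 0; 1, q⁻¹]

/-- `betaMat q a k` is the product of the first `k` alternating factors
`σ₁(q)^{-a 1} · σ₂(q)^{a 2} · σ₁(q)^{-a 3} ⋯` (indices start at 1). -/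
noncomputable def betaMat (q : ℝ) (a : ℕ → ℤ) : ℕ → Matrix (Fin 2) (Fin 2) ℝ
  | 0 => 1
  | k + 1 => betaMat q a k *
      (if (k + 1) % 2 = 1 then sig1 q ^ (-(a (k + 1))) else sig2 q ^ (a (k + 1)))

/-- Möbius action of a 2×2 real matrix on a real number: z ↦ (Az + B)/(Cz + D). -/
noncomputable def mobiusAct (M : Matrix (Fin 2) (Fin 2) ℝ) (z : ℝ) : ℝ :=
  (M 0 0 * z + M 0 1) / (M 1 0 * z + M 1 1)

/-- Möbius image of ∞ under a 2×2 real matrix: ∞ ↦ A/C. -/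
noncomputable def mobiusInf (M : Matrix (Fin 2) (Fin 2) ℝ) : ℝ := M 0 0 / M 1 0

/-- `a` (on indices 1,…,2n) is an even continued form: either `a₁ ≥ 0` and `aᵢ ≥ 1` for
`2 ≤ i ≤ 2n`, or `a₁ ≤ 0` and `aᵢ ≤ −1` for `2 ≤ i ≤ 2n`. -/
def IsEvenForm (n : ℕ) (a : ℕ → ℤ) : Prop :=
  1 ≤ n ∧ ((0 ≤ a 1 ∧ ∀ i, 2 ≤ i → i ≤ 2 * n → 1 ≤ a i)
    ∨ (a 1 ≤ 0 ∧ ∀ i, 2 ≤ i → i ≤ 2 * n → a i ≤ -1))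

/-- Value of the continued fraction `a i + 1/(a (i+1) + 1/(⋯ + 1/(a last)))`. -/
def cfVal (a : ℕ → ℤ) (last i : ℕ) : ℚ :=
  if last ≤ i then (a i : ℚ)
  else (a i : ℚ) + 1 / cfVal a last (i + 1)
termination_by last - i
decreasing_by omega

/-- `a` (on indices 1,…,2n) is the even continued fraction expansion of the rational `x`:
for `x ≠ 0` it is an even continued form of value `x`; by convention the expansion of `0`
is `(−1, 1)`. -/
def IsECFExp (n : ℕ) (a : ℕ → ℤ) (x : ℚ) : Prop :=
  (x ≠ 0 ∧ IsEvenForm n a ∧ cfVal a (2 * n) 1 = x) ∨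
  (x = 0 ∧ n = 1 ∧ a 1 = -1 ∧ a 2 = 1)

/-- The right q-deformation attached to expansion data `(n, a)`:
the image of ∞ under the Möbius transformation of β(a, q). -/
noncomputable def sharpVal (q : ℝ) (n : ℕ) (a : ℕ → ℤ) : ℝ :=
  mobiusInf (betaMat q a (2 * n))

/-- The left q-deformation attached to expansion data `(n, a)`:
the image of 1/(1−q) under the Möbius transformation of β(a, q). -/
noncomputable def flatVal (q : ℝ) (n : ℕ) (a : ℕ → ℤ) : ℝ :=
  mobiusAct (betaMat q a (2 * n)) (1 / (1 - q))

/-!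
Every factor `σ₁(q)^{-a}`, `σ₂(q)^{a}` with `a ≥ 0` is a product of copies of
`σ₁(q)⁻¹ = [[q, 1], [0, 1]]` or `σ₂(q)`, which are totally nonnegative (nonnegative entries and
determinant) with positive diagonal; these matrices form a monoid, so every partial product
`Mₙ = [[A, B], [C, D]]` is one as well, and `C > 0` once a factor `σ₂(q)^{a}` with `a ≥ 1` has
occurred. Multiplying `Mₙ` on the right by a matrix with nonnegative lower-left entry replaces
the column `(A, C)` by a nonnegative combination of `(A, C)` and `(B, D)`, and `B/D ≤ A/C`
because `det Mₙ ≥ 0`; hence `A/C` never increases. Being nonnegative, it converges.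
-/

namespace QDeform

def totallyNonnegPosDiag : Submonoid (Matrix (Fin 2) (Fin 2) ℝ) where
  carrier := {M | (∀ i j, 0 ≤ M i j) ∧ 0 < M 0 0 ∧ 0 < M 1 1 ∧ 0 ≤ M.det}
  one_mem' := by
    refine ⟨fun i j => ?_, by simp, by simp, by simp⟩
    rw [one_apply]
    split_ifs <;> norm_num
  mul_mem' := by
    rintro M N ⟨hM, hM00, hM11, hMdet⟩ ⟨hN, hN00, hN11, hNdet⟩
    refine ⟨fun i j => ?_, ?_, ?_, ?_⟩
    · rw [mul_apply, Fin.sum_univ_two]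
      exact add_nonneg (mul_nonneg (hM i 0) (hN 0 j)) (mul_nonneg (hM i 1) (hN 1 j))
    · rw [mul_apply, Fin.sum_univ_two]
      exact add_pos_of_pos_of_nonneg (mul_pos hM00 hN00) (mul_nonneg (hM 0 1) (hN 1 0))
    · rw [mul_apply, Fin.sum_univ_two]
      exact add_pos_of_nonneg_of_pos (mul_nonneg (hM 1 0) (hN 0 1)) (mul_pos hM11 hN11)
    · rw [det_mul]
      exact mul_nonneg hMdet hNdet

local notation "𝒫" => totallyNonnegPosDiag

lemma mul_apply_one_zero_pos {M N : Matrix (Fin 2) (Fin 2) ℝ} (hM : M ∈ 𝒫) (hN : N ∈ 𝒫)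
    (h : 0 < M 1 0 ∨ 0 < N 1 0) : 0 < (M * N) 1 0 := by
  obtain ⟨hM, -, hM11, -⟩ := hM
  obtain ⟨hN, hN00, -, -⟩ := hN
  rw [mul_apply, Fin.sum_univ_two]
  rcases h with h | h
  · exact add_pos_of_pos_of_nonneg (mul_pos h hN00) (mul_nonneg (hM 1 1) (hN 1 0))
  · exact add_pos_of_nonneg_of_pos (mul_nonneg (hM 1 0) (hN 0 0)) (mul_pos hM11 h)

lemma ratio_mul_le {M N : Matrix (Fin 2) (Fin 2) ℝ} (hdet : 0 ≤ M.det) (hN : 0 ≤ N 1 0)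
    (hM10 : 0 < M 1 0) (hMN10 : 0 < (M * N) 1 0) :
    (M * N) 0 0 / (M * N) 1 0 ≤ M 0 0 / M 1 0 := by
  rw [div_le_div_iff₀ hMN10 hM10]
  rw [det_fin_two] at hdet
  simp only [mul_apply, Fin.sum_univ_two]
  nlinarith [mul_nonneg hdet hN]

lemma sig1_inv {q : ℝ} (hq : q ≠ 0) : (sig1 q)⁻¹ = !![q, 1; 0, 1] := by
  apply inv_eq_left_inv
  rw [sig1, mul_fin_two, one_fin_two]
  ext i j
  fin_cases i <;> fin_cases j <;> simp [hq]

lemma inv_sig1_mem {q : ℝ} (hq : 0 < q) : (sig1 q)⁻¹ ∈ 𝒫 := by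
  rw [sig1_inv hq.ne']
  refine ⟨fun i j => ?_, by simpa using hq, by simp, by simp [det_fin_two, hq.le]⟩
  fin_cases i <;> fin_cases j <;> simp [hq.le]

lemma sig1_zpow_neg_mem {q : ℝ} (hq : 0 < q) {m : ℤ} (hm : 0 ≤ m) : sig1 q ^ (-m) ∈ 𝒫 := by
  lift m to ℕ using hm
  rw [zpow_neg_natCast, ← inv_pow']
  exact pow_mem (inv_sig1_mem hq) m

lemma sig2_mem {q : ℝ} (hq : 0 < q) : sig2 q ∈ 𝒫 := by
  refine ⟨fun i j => ?_, by simp [sig2], by simpa [sig2] using hq, ?_⟩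
  · fin_cases i <;> fin_cases j <;> simp [sig2, hq.le]
  · simp [sig2, det_fin_two, hq.le]

lemma sig2_zpow_mem {q : ℝ} (hq : 0 < q) {m : ℤ} (hm : 0 ≤ m) : sig2 q ^ m ∈ 𝒫 := by
  lift m to ℕ using hm
  rw [zpow_natCast]
  exact pow_mem (sig2_mem hq) m

lemma sig2_zpow_one_zero_pos {q : ℝ} (hq : 0 < q) {m : ℤ} (hm : 1 ≤ m) :
    0 < (sig2 q ^ m) 1 0 := by
  obtain ⟨k, rfl⟩ : ∃ k : ℕ, m = k + 1 := ⟨(m - 1).toNat, by omega⟩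
  rw [← Nat.cast_succ, zpow_natCast, pow_succ]
  exact mul_apply_one_zero_pos (pow_mem (sig2_mem hq) k) (sig2_mem hq) (Or.inr (by simp [sig2]))

lemma betaMat_succ (q : ℝ) (a : ℕ → ℤ) (k : ℕ) :
    betaMat q a (k + 1) = betaMat q a k *
      (if (k + 1) % 2 = 1 then sig1 q ^ (-(a (k + 1))) else sig2 q ^ (a (k + 1))) :=
  rfl

variable {q : ℝ} {a : ℕ → ℤ}

lemma betaMat_factor_mem (hq : 0 < q) (ha : ∀ k, 1 ≤ k → 0 ≤ a k) (k : ℕ) :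
    (if (k + 1) % 2 = 1 then sig1 q ^ (-(a (k + 1))) else sig2 q ^ (a (k + 1))) ∈ 𝒫 := by
  split_ifs
  · exact sig1_zpow_neg_mem hq (ha _ k.succ_pos)
  · exact sig2_zpow_mem hq (ha _ k.succ_pos)

lemma betaMat_mem (hq : 0 < q) (ha : ∀ k, 1 ≤ k → 0 ≤ a k) (n : ℕ) : betaMat q a n ∈ 𝒫 := by
  induction n with
  | zero => exact one_mem 𝒫
  | succ k ih => exact mul_mem ih (betaMat_factor_mem hq ha k)

lemma betaMat_one_zero_pos (hq : 0 < q) (ha : ∀ k, 1 ≤ k → 0 ≤ a k)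
    (h2 : ∀ k, 2 ≤ k → 1 ≤ a k) : ∀ n, 2 ≤ n → 0 < betaMat q a n 1 0 := by
  intro n hn
  induction n, hn using Nat.le_induction with
  | base =>
    rw [betaMat_succ, if_neg (by decide)]
    exact mul_apply_one_zero_pos (betaMat_mem hq ha 1) (sig2_zpow_mem hq (ha 2 (by decide)))
      (Or.inr (sig2_zpow_one_zero_pos hq (h2 2 le_rfl)))
  | succ k _ ih =>
    rw [betaMat_succ]
    exact mul_apply_one_zero_pos (betaMat_mem hq ha k) (betaMat_factor_mem hq ha k) (Or.inl ih)

end QDeform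

open QDeform in
theorem qdeform_convergents_converge_general (q : ℝ) (hq0 : 0 < q)
    (a : ℕ → ℤ) (h1 : 0 ≤ a 1) (h2 : ∀ k, 2 ≤ k → 1 ≤ a k) :
    (∀ n, 2 ≤ n → 0 < (betaMat q a n *ᵥ ![1, 0]) 1) ∧
    ∃ L : ℝ, Tendsto
      (fun n => (betaMat q a n *ᵥ ![1, 0]) 0 / (betaMat q a n *ᵥ ![1, 0]) 1)
      atTop (nhds L) := by
  have ha : ∀ k, 1 ≤ k → 0 ≤ a k := fun k hk => by
    rcases hk.eq_or_lt with rfl | hk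
    exacts [h1, (h2 k hk).trans' zero_le_one]
  have hmem := betaMat_mem hq0 ha
  have hC := betaMat_one_zero_pos hq0 ha h2
  have hcol : ∀ n, betaMat q a n *ᵥ ![1, 0] = fun i => betaMat q a n i 0 := fun n => by
    ext i; simp [mulVec, dotProduct, Fin.sum_univ_two]
  simp only [hcol]
  refine ⟨hC, ?_⟩
  set x : ℕ → ℝ := fun n => betaMat q a (n + 2) 0 0 / betaMat q a (n + 2) 1 0
  have hanti : Antitone x := antitone_nat_of_succ_le fun n => by
    simp only [x, betaMat_succ q a (n + 2)]
    exact ratio_mul_le (hmem _).2.2.2 ((betaMat_factor_mem hq0 ha _).1 1 0) (hC _ le_add_self)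
      (betaMat_succ q a (n + 2) ▸ hC _ (by omega))
  have hbdd : BddBelow (Set.range x) :=
    ⟨0, by rintro _ ⟨n, rfl⟩; exact div_nonneg ((hmem _).1 0 0) (hC _ le_add_self).le⟩
  exact ⟨_, (tendsto_add_atTop_iff_nat 2).1 (tendsto_atTop_ciInf hanti hbdd)⟩

/-- convergence of q-deformed convergents of an infinite continued
fraction: for 0 < q < 1 and integers a₁ ≥ 0, aₖ ≥ 1 (k ≥ 2), with Mₙ the product of
the first n alternating factors and vₙ = Mₙ·(1, 0)ᵀ, the second coordinate of vₙ is
positive for n ≥ 2 and the ratios (vₙ)₁/(vₙ)₂ converge in ℝ. -/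
theorem qdeform_convergents_converge (q : ℝ) (hq0 : 0 < q) (hq1 : q < 1)
    (a : ℕ → ℤ) (h1 : 0 ≤ a 1) (h2 : ∀ k, 2 ≤ k → 1 ≤ a k) :
    (∀ n, 2 ≤ n → 0 < (betaMat q a n *ᵥ ![1, 0]) 1) ∧
    ∃ L : ℝ, Tendsto
      (fun n => (betaMat q a n *ᵥ ![1, 0]) 0 / (betaMat q a n *ᵥ ![1, 0]) 1)
      atTop (nhds L) :=
  qdeform_convergents_converge_general q hq0 a h1 h2
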